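/- Let $P_L$ be $1/2$ times the Laplacian of the path graph on $L$ vertices and let $E_0$ be the diagonal matrix with a single $1$ in position $(0,0)$. Then the smallest eigenvalue of $P_L + \frac{1}{2}E_0$ equals $1 - \cos(\pi/(2L+1))$, and consequently the smallest eigenvalue of $P_L + E_0$ is at least $1 - \cos(\pi/(2L+1))$. -/

import Mathlib

open Matrix

/-- Half the Laplacian of the path graph on `L` vertices. -/
noncomputable def pathMat (L : ℕ) : Matrix (Fin L) (Fin L) ℝ :=
  Matrix.of fun i j =>
    if i = j then
      ((if (i : ℕ) + 1 < L then (1/2 : ℝ) else 0) + (if 0 < (i : ℕ) then (1/2 : ℝ) else 0))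
    else if (i : ℕ) + 1 = (j : ℕ) ∨ (j : ℕ) + 1 = (i : ℕ) then -(1/2 : ℝ) else 0

/-- Diagonal matrix with a single `1` at position `(0,0)`. -/
noncomputable def e0Diag (L : ℕ) : Matrix (Fin L) (Fin L) ℝ :=
  Matrix.of fun i j => if i = j ∧ (i : ℕ) = 0 then 1 else 0


/-! With `θ = π / (2L + 1)`, the vector `w j = sin ((j + 1) θ)` is a positive eigenvector of
`P_L + E₀/2` for `1 - cos θ`. In the interior rows this is
`sin (x - θ) + sin (x + θ) = 2 sin x cos θ`; in the first row the missing left neighbour is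
`sin 0 = 0` and `E₀/2` restores the diagonal; in the last row the missing right neighbour
`sin ((L + 1) θ)` equals `sin (L θ)` because `(2L + 1) θ = π`.

A matrix with nonpositive off-diagonal entries admitting a positive `w` with `A w ≥ c w` has all
real eigenvalues `≥ c`: for an eigenvector `v` with a positive entry, compare `v` with `t w` at an
index where `t = v_j / w_j` is maximal. This applies to `P_L + E₀/2` and, since `E₀ w ≥ 0`, to
`P_L + E₀`. -/

open Finset Real

namespace Matrix

variable {ι 𝕜 : Type*} [Fintype ι] [Field 𝕜] [LinearOrder 𝕜] [IsStrictOrderedRing 𝕜]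
  {A : Matrix ι ι 𝕜} {w v : ι → 𝕜} {c μ : 𝕜}

theorem le_eigenvalue_of_smul_le_mulVec_of_apply_pos (hA : ∀ i j, i ≠ j → A i j ≤ 0)
    (hw : ∀ i, 0 < w i) (hAw : c • w ≤ A *ᵥ w) (hAv : A *ᵥ v = μ • v) {k : ι} (hk : 0 < v k) :
    c ≤ μ := by
  obtain ⟨i, -, hi⟩ := exists_max_image univ (fun j => v j / w j) ⟨k, mem_univ k⟩
  set t := v i / w i
  have ht : 0 < t := (div_pos hk (hw k)).trans_le (hi k (mem_univ k))
  have hvt (j : ι) : v j ≤ t * w j := (div_le_iff₀ (hw j)).1 (hi j (mem_univ j))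
  have hvi : v i = t * w i := (div_mul_cancel₀ _ (hw i).ne').symm
  have hsum : t * (A *ᵥ w) i ≤ (A *ᵥ v) i := by
    simp only [mulVec, dotProduct, mul_sum]
    refine sum_le_sum fun j _ => ?_
    rcases eq_or_ne i j with rfl | hij
    · rw [hvi, mul_left_comm]
    · nlinarith [hA i j hij, hvt j]
  have hcμ : c * v i ≤ μ * v i :=
    calc c * v i = t * (c * w i) := by rw [hvi]; ring
      _ ≤ t * (A *ᵥ w) i := mul_le_mul_of_nonneg_left (hAw i) ht.le
      _ ≤ (A *ᵥ v) i := hsum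
      _ = μ * v i := by rw [hAv, Pi.smul_apply, smul_eq_mul]
  exact le_of_mul_le_mul_right hcμ (hvi ▸ mul_pos ht (hw i))

theorem le_eigenvalue_of_smul_le_mulVec (hA : ∀ i j, i ≠ j → A i j ≤ 0) (hw : ∀ i, 0 < w i)
    (hAw : c • w ≤ A *ᵥ w) (hv : v ≠ 0) (hAv : A *ᵥ v = μ • v) : c ≤ μ := by
  obtain ⟨k, hk⟩ := Function.ne_iff.mp hv
  rcases hk.lt_or_gt with hk | hk
  · refine le_eigenvalue_of_smul_le_mulVec_of_apply_pos hA hw hAw (v := -v) ?_ (k := k) ?_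
    · rw [mulVec_neg, hAv, smul_neg]
    · simpa using hk
  · exact le_eigenvalue_of_smul_le_mulVec_of_apply_pos hA hw hAw hAv hk

end Matrix

theorem Fin.sum_univ_ite_val_eq {M : Type*} [AddCommMonoid M] (L c : ℕ) (a : M) :
    ∑ j : Fin L, (if (j : ℕ) = c then a else 0) = if c < L then a else 0 := by
  rw [Fin.sum_univ_eq_sum_range (fun j => if j = c then a else 0)]
  simp only [sum_ite_eq', mem_range]

lemma pathMat_mulVec {L : ℕ} (g : ℕ → ℝ) (i : Fin L) :
    (pathMat L *ᵥ fun j => g j) i =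
      (if (i : ℕ) + 1 < L then (g i - g (i + 1)) / 2 else 0) +
        (if 0 < (i : ℕ) then (g i - g (i - 1)) / 2 else 0) := by
  obtain ⟨n, hn⟩ := i
  simp only [mulVec, dotProduct, pathMat, of_apply, Fin.ext_iff]
  set d : ℝ := (if n + 1 < L then 1 / 2 else 0) + (if 0 < n then 1 / 2 else 0)
  have entry (j : ℕ) :
      (if n = j then d else if n + 1 = j ∨ j + 1 = n then -(1 / 2 : ℝ) else 0) * g j =
        (if j = n then d * g n else 0) + (if j = n + 1 then -g (n + 1) / 2 else 0) +
          (if j = n - 1 then (if 0 < n then -g (n - 1) / 2 else 0) else 0) := by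
    split_ifs <;> subst_vars <;> first | ring1 | (exfalso; omega)
  simp only [entry, sum_add_distrib, Fin.sum_univ_ite_val_eq, d]
  split_ifs <;> first | ring1 | (exfalso; omega)

lemma e0Diag_mulVec {L : ℕ} (v : Fin L → ℝ) (i : Fin L) :
    (e0Diag L *ᵥ v) i = if (i : ℕ) = 0 then v i else 0 := by
  simp [mulVec, dotProduct, e0Diag, ite_and]

lemma pathMat_add_smul_e0Diag_apply_nonpos {L : ℕ} (c : ℝ) {i j : Fin L} (h : i ≠ j) :
    (pathMat L + c • e0Diag L) i j ≤ 0 := by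
  simp only [Matrix.add_apply, Matrix.smul_apply, pathMat, e0Diag, of_apply,
    h, false_and, if_false, smul_zero, add_zero]
  split_ifs <;> norm_num

noncomputable def pathAngle (L : ℕ) : ℝ := π / (2 * (L : ℝ) + 1)

noncomputable def pathSin (L n : ℕ) : ℝ := sin ((n + 1) * pathAngle L)

lemma pathSin_pos {L n : ℕ} (hn : n < L) : 0 < pathSin L n := by
  have hL : (0 : ℝ) < 2 * L + 1 := by positivity
  have hn' : (n : ℝ) + 1 ≤ L := by exact_mod_cast hn
  apply sin_pos_of_pos_of_lt_pi
  · unfold pathAngle; positivity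
  · rw [pathAngle, mul_div_assoc', div_lt_iff₀ hL]
    nlinarith [pi_pos]

theorem pathMat_add_half_smul_e0Diag_mulVec_pathSin (L : ℕ) :
    (pathMat L + (1 / 2 : ℝ) • e0Diag L) *ᵥ (fun j : Fin L => pathSin L j) =
      (1 - cos (pathAngle L)) • fun j : Fin L => pathSin L j := by
  ext ⟨i, hi⟩
  have hsum : 2 * pathSin L i * cos (pathAngle L) = sin (i * pathAngle L) + pathSin L (i + 1) := by
    rw [pathSin, pathSin, two_mul_sin_mul_cos]
    push_cast
    ring_nf
  have hprev (h : 0 < i) : pathSin L (i - 1) = sin (i * pathAngle L) := by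
    rw [pathSin, Nat.cast_sub h]
    push_cast
    ring_nf
  have hlast (h : i + 1 = L) : pathSin L (i + 1) = pathSin L i := by
    subst h
    rw [pathSin, pathSin, ← sin_pi_sub, pathAngle]
    field_simp
    push_cast
    ring_nf
  have hnext_term : (if i + 1 < L then (pathSin L i - pathSin L (i + 1)) / 2 else 0) =
      (pathSin L i - pathSin L (i + 1)) / 2 := by
    split_ifs with h
    · rfl
    · rw [hlast (by omega), sub_self, zero_div]
  have hprev_term : (if 0 < i then (pathSin L i - pathSin L (i - 1)) / 2 else 0) +
      1 / 2 * (if i = 0 then pathSin L i else 0) = (pathSin L i - sin (i * pathAngle L)) / 2 := by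
    rcases Nat.eq_zero_or_pos i with rfl | h
    · norm_num [div_eq_inv_mul]
    · simp [h, h.ne', hprev h]
  simp only [add_mulVec, smul_mulVec, pathMat_mulVec, Pi.add_apply, Pi.smul_apply, smul_eq_mul,
    e0Diag_mulVec]
  linarith

/-- The smallest eigenvalue of `P_L + (1/2)E₀` equals `1 - cos(π/(2L+1))`, and consequently
the smallest eigenvalue of `P_L + E₀` is at least `1 - cos(π/(2L+1))`. -/
theorem stmt13 (L : ℕ) (hL : 1 ≤ L) :
    IsLeast {μ : ℝ | ∃ v : Fin L → ℝ, v ≠ 0 ∧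
        (pathMat L + (1/2 : ℝ) • e0Diag L).mulVec v = μ • v}
      (1 - Real.cos (Real.pi / (2 * (L : ℝ) + 1))) ∧
    (∀ (μ : ℝ) (v : Fin L → ℝ), v ≠ 0 → (pathMat L + e0Diag L).mulVec v = μ • v →
      1 - Real.cos (Real.pi / (2 * (L : ℝ) + 1)) ≤ μ) := by
  rw [← pathAngle.eq_1]
  have hMw := pathMat_add_half_smul_e0Diag_mulVec_pathSin L
  set w : Fin L → ℝ := fun j => pathSin L j
  have hw (i : Fin L) : 0 < w i := pathSin_pos i.2
  have hsplit : pathMat L + e0Diag L =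
      (pathMat L + (1 / 2 : ℝ) • e0Diag L) + (1 / 2 : ℝ) • e0Diag L := by
    rw [add_assoc, ← add_smul]
    norm_num
  refine ⟨⟨⟨w, fun h => (hw ⟨0, hL⟩).ne' (congrFun h _), hMw⟩, ?_⟩, fun μ v hv hAv => ?_⟩
  · rintro μ ⟨v, hv, hAv⟩
    exact le_eigenvalue_of_smul_le_mulVec (fun i j => pathMat_add_smul_e0Diag_apply_nonpos _) hw
      hMw.ge hv hAv
  · refine le_eigenvalue_of_smul_le_mulVec (fun i j h => ?_) hw (fun i => ?_) hv hAv
    · simpa using pathMat_add_smul_e0Diag_apply_nonpos 1 h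
    · have hE₀w : 0 ≤ (e0Diag L *ᵥ w) i := by
        rw [e0Diag_mulVec]
        split_ifs
        exacts [(hw i).le, le_rfl]
      rw [hsplit, add_mulVec, hMw, smul_mulVec]
      simp only [Pi.add_apply, Pi.smul_apply, smul_eq_mul]
      linarith
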